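/- arXiv:1412.3068 — 3 statements merged into one kernel-verified Lean document; each statement's English description precedes it below -/
import Mathlib

section
/- Let L be a Lie algebra of a set-arrangement 𝒜 on X. Then π' ∘ s' = id on ⊕_{A∈𝒜} L_A', π' is surjective, s' is injective, and the C-submodule im(s') = Σ_{A∈𝒜} im(s_A') of L' is an internal direct sum of the submodules im(s_A'). -/
open FreeLieAlgebra

/-- A set-arrangement on `X`: every member has at least two elements, two distinct members
meet in at most one element, and the union of all members is `X`. -/
def IsSetArrangement {X : Type*} (𝒜 : Set (Set X)) : Prop :=
  (∀ A ∈ 𝒜, 2 ≤ A.ncard) ∧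
    (∀ A ∈ 𝒜, ∀ B ∈ 𝒜, A ≠ B → (A ∩ B).Subsingleton) ∧
    ⋃₀ 𝒜 = Set.univ

variable (C : Type*) [CommRing C] {X : Type*}

/-- The inclusion `F(A) → F(X)` of free Lie algebras. -/
noncomputable def inclX (A : Set X) : FreeLieAlgebra C A →ₗ⁅C⁆ FreeLieAlgebra C X :=
  FreeLieAlgebra.lift C fun a => FreeLieAlgebra.of C (a : X)

/-- The inclusion `F(A) → F(S)` of free Lie algebras along `A ⊆ S`. -/
noncomputable def inclSub {A S : Set X} (h : A ⊆ S) :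
    FreeLieAlgebra C A →ₗ⁅C⁆ FreeLieAlgebra C S :=
  FreeLieAlgebra.lift C fun a => FreeLieAlgebra.of C (⟨a.1, h a.2⟩ : S)

/-- Admissibility of the relations: `R_A ⊆ [F(A), F(A)]`. -/
def AdmissibleRel (𝒜 : Set (Set X)) (Rel : ∀ A : Set X, Set (FreeLieAlgebra C A)) : Prop :=
  ∀ A ∈ 𝒜, Rel A ⊆ (LieAlgebra.derivedSeries C (FreeLieAlgebra C A) 1 : Set (FreeLieAlgebra C A))

/-- The defining ideal of a Lie algebra of a set-arrangement: generated by all `⁅x,y⁆` for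
pairs not contained in any member of `𝒜`, together with the relations `R_A`, `A ∈ 𝒜`. -/
noncomputable def definingIdeal (𝒜 : Set (Set X)) (Rel : ∀ A : Set X, Set (FreeLieAlgebra C A)) :
    LieIdeal C (FreeLieAlgebra C X) :=
  LieSubmodule.lieSpan C (FreeLieAlgebra C X)
    ({z | ∃ x y : X, (∀ A ∈ 𝒜, ¬({x, y} : Set X) ⊆ A) ∧ z = ⁅of C x, of C y⁆} ∪
      ⋃ A, ⋃ (_ : A ∈ 𝒜), inclX C A '' Rel A)

/-- The Lie algebra `L` of the set-arrangement `𝒜` with relations `Rel`. -/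
noncomputable abbrev ArrLie (𝒜 : Set (Set X)) (Rel : ∀ A : Set X, Set (FreeLieAlgebra C A)) :=
  FreeLieAlgebra C X ⧸ definingIdeal C 𝒜 Rel

/-- The quotient map `F(X) → L`. -/
noncomputable def arrMk (𝒜 : Set (Set X)) (Rel : ∀ A : Set X, Set (FreeLieAlgebra C A)) :
    FreeLieAlgebra C X → ArrLie C 𝒜 Rel :=
  LieSubmodule.Quotient.mk (N := definingIdeal C 𝒜 Rel)

/-- The ideal `⟨R_A⟩` of `F(A)`. -/
noncomputable def locIdeal (A : Set X) (Rel : ∀ A : Set X, Set (FreeLieAlgebra C A)) :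
    LieIdeal C (FreeLieAlgebra C A) :=
  LieSubmodule.lieSpan C (FreeLieAlgebra C A) (Rel A)

/-- The localized Lie algebra `L_A = F(A)/⟨R_A⟩`. -/
noncomputable abbrev LocLie (A : Set X) (Rel : ∀ A : Set X, Set (FreeLieAlgebra C A)) :=
  FreeLieAlgebra C A ⧸ locIdeal C A Rel

/-- The quotient map `F(A) → L_A`. -/
noncomputable def locMk (A : Set X) (Rel : ∀ A : Set X, Set (FreeLieAlgebra C A)) :
    FreeLieAlgebra C A → LocLie C A Rel :=
  LieSubmodule.Quotient.mk (N := locIdeal C A Rel)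

open Classical in
/-- The canonical Lie algebra map `F(X) → L_A` killing the generators outside `A`. -/
noncomputable def locProj (A : Set X) (Rel : ∀ A : Set X, Set (FreeLieAlgebra C A)) :
    FreeLieAlgebra C X →ₗ⁅C⁆ LocLie C A Rel :=
  FreeLieAlgebra.lift C fun x : X =>
    if h : x ∈ A then locMk C A Rel (of C (⟨x, h⟩ : A)) else 0

/-- The replacement condition. -/
def ReplacementCond (𝒜 : Set (Set X)) (Rel : ∀ A : Set X, Set (FreeLieAlgebra C A)) : Prop :=
  ∀ A ∈ 𝒜, 3 ≤ A.ncard → ∀ x ∈ A, (∃ B ∈ 𝒜, B ≠ A ∧ x ∈ B) →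
    (LieAlgebra.derivedSeries C (LocLie C A Rel) 1 : Set (LocLie C A Rel)) ⊆
      (LieSubalgebra.lieSpan C (LocLie C A Rel)
        {z | ∃ a : A, (a : X) ≠ x ∧ z = locMk C A Rel (of C a)} : Set (LocLie C A Rel))

/-- Lie monomials of weight `n` with respect to a weighting `d` of the generators. -/
inductive IsLieMonomial (d : X → ℕ) : FreeLieAlgebra C X → ℕ → Prop
  | of (x : X) : IsLieMonomial d (of C x) (d x)
  | lie {u v : FreeLieAlgebra C X} {m n : ℕ} :
      IsLieMonomial d u m → IsLieMonomial d v n → IsLieMonomial d ⁅u, v⁆ (m + n)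

/-- Homogeneity of an element of the free Lie algebra with respect to a weighting. -/
def IsHomogeneous (d : X → ℕ) (r : FreeLieAlgebra C X) : Prop :=
  ∃ n : ℕ, r ∈ Submodule.span C {u | IsLieMonomial C d u n}

/-- The support of a sub-arrangement. -/
def arrSupp {X : Type*} (ℬ : Set (Set X)) : Set X := ⋃₀ ℬ

/-- `ℬ` is a closed sub-arrangement of `𝒜`. -/
def IsClosedSub {X : Type*} (𝒜 ℬ : Set (Set X)) : Prop :=
  ℬ ⊆ 𝒜 ∧ ∀ A ∈ 𝒜, A ∉ ℬ → (A ∩ arrSupp ℬ).Subsingleton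

/-- The relations `R_ℬ` of a sub-arrangement. -/
noncomputable def subRel (ℬ : Set (Set X)) (Rel : ∀ A : Set X, Set (FreeLieAlgebra C A)) :
    Set (FreeLieAlgebra C (arrSupp ℬ)) :=
  (⋃ B, ⋃ h : B ∈ ℬ, inclSub C (Set.subset_sUnion_of_mem h) '' Rel B) ∪
    {z | ∃ x y : arrSupp ℬ, (∀ B ∈ ℬ, ¬({(x : X), (y : X)} : Set X) ⊆ B) ∧
      z = ⁅of C x, of C y⁆}

/-- The ideal `⟨R_ℬ⟩` of `F(supp ℬ)`. -/
noncomputable def subIdeal (ℬ : Set (Set X)) (Rel : ∀ A : Set X, Set (FreeLieAlgebra C A)) :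
    LieIdeal C (FreeLieAlgebra C (arrSupp ℬ)) :=
  LieSubmodule.lieSpan C (FreeLieAlgebra C (arrSupp ℬ)) (subRel C ℬ Rel)

/-- The localized Lie algebra `L_ℬ` at a sub-arrangement. -/
noncomputable abbrev SubLie (ℬ : Set (Set X)) (Rel : ∀ A : Set X, Set (FreeLieAlgebra C A)) :=
  FreeLieAlgebra C (arrSupp ℬ) ⧸ subIdeal C ℬ Rel

/-- The quotient map `F(supp ℬ) → L_ℬ`. -/
noncomputable def subMk (ℬ : Set (Set X)) (Rel : ∀ A : Set X, Set (FreeLieAlgebra C A)) :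
    FreeLieAlgebra C (arrSupp ℬ) → SubLie C ℬ Rel :=
  LieSubmodule.Quotient.mk (N := subIdeal C ℬ Rel)

open Classical in
/-- The canonical Lie algebra map `F(X) → L_ℬ` killing the generators outside `supp ℬ`. -/
noncomputable def subProj (ℬ : Set (Set X)) (Rel : ∀ A : Set X, Set (FreeLieAlgebra C A)) :
    FreeLieAlgebra C X →ₗ⁅C⁆ SubLie C ℬ Rel :=
  FreeLieAlgebra.lift C fun x : X =>
    if h : x ∈ arrSupp ℬ then subMk C ℬ Rel (of C (⟨x, h⟩ : arrSupp ℬ)) else 0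
/-!
Both `π_A ∘ s_A` and the identity of `L_A` are Lie morphisms fixing the generators, so they agree.
For `A ≠ B` the morphism `π_B ∘ s_A` sends each generator of `L_A` either to `0` or to the
generator of the single point of `A ∩ B`; these images commute pairwise, so the image of
`π_B ∘ s_A` is abelian and it kills `L_A'`. Hence `π' ∘ s' = id` on `⊕ L_A'`, and the other three
claims follow formally.
-/

section LieAlgebra

variable {R L L' : Type*} [CommRing R] [LieRing L] [LieAlgebra R L] [LieRing L'] [LieAlgebra R L']

lemma LieHom.apply_eq_zero_of_mem_derivedSeries_one (f : L →ₗ⁅R⁆ L')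
    (hf : ∀ x y, ⁅f x, f y⁆ = 0) {z : L} (hz : z ∈ LieAlgebra.derivedSeries R L 1) : f z = 0 := by
  suffices LieAlgebra.derivedSeries R L 1 ≤ f.ker from this hz
  rw [LieAlgebra.derivedSeries_def, LieAlgebra.derivedSeriesOfIdeal_succ,
    LieAlgebra.derivedSeriesOfIdeal_zero, LieSubmodule.lie_le_iff]
  intro x _ y _
  rw [LieHom.mem_ker, f.map_lie, hf]

lemma LieHom.apply_mem_derivedSeries_one (f : L →ₗ⁅R⁆ L') {z : L}
    (hz : z ∈ LieAlgebra.derivedSeries R L 1) : f z ∈ LieAlgebra.derivedSeries R L' 1 :=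
  LieIdeal.derivedSeries_map_le (f := f) 1 (LieIdeal.mem_map hz)

noncomputable def LieIdeal.mkHom (I : LieIdeal R L) : L →ₗ⁅R⁆ L ⧸ I where
  toLinearMap := (LieSubmodule.Quotient.mk' I).toLinearMap
  map_lie' := LieSubmodule.Quotient.mk_bracket I _ _

lemma LieIdeal.mkHom_surjective (I : LieIdeal R L) : Function.Surjective I.mkHom :=
  LieSubmodule.Quotient.surjective_mk' I

end LieAlgebra

namespace FreeLieAlgebra

variable {R L : Type*} {X : Type*} [CommRing R] [LieRing L] [LieAlgebra R L]

/-- `F` factors through the Lie subalgebra spanned by the images of the generators, which is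
abelian. -/
lemma lie_apply_apply_eq_zero {F : FreeLieAlgebra R X →ₗ⁅R⁆ L}
    (hF : ∀ x y, ⁅F (of R x), F (of R y)⁆ = 0) (u v : FreeLieAlgebra R X) : ⁅F u, F v⁆ = 0 := by
  set S := LieSubalgebra.lieSpan R L (Set.range (F ∘ of R))
  have : IsLieAbelian S := LieSubalgebra.isLieAbelian_lieSpan_iff.mpr <| by
    rintro _ ⟨x, rfl⟩ _ ⟨y, rfl⟩
    exact hF x y
  have hfactor :
      F = S.incl.comp (lift R fun x => ⟨F (of R x), LieSubalgebra.subset_lieSpan ⟨x, rfl⟩⟩) :=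
    hom_ext fun x => by simp
  rw [hfactor, LieHom.comp_apply, LieHom.comp_apply, ← LieHom.map_lie, trivial_lie_zero,
    map_zero]

lemma lie_apply_apply_eq_zero_of_quotient {I : LieIdeal R (FreeLieAlgebra R X)}
    {g : FreeLieAlgebra R X ⧸ I →ₗ⁅R⁆ L}
    (hg : ∀ x y, ⁅g (I.mkHom (of R x)), g (I.mkHom (of R y))⁆ = 0) (u v : FreeLieAlgebra R X ⧸ I) :
    ⁅g u, g v⁆ = 0 := by
  obtain ⟨u, rfl⟩ := I.mkHom_surjective u
  obtain ⟨v, rfl⟩ := I.mkHom_surjective v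
  exact lie_apply_apply_eq_zero (F := g.comp I.mkHom) hg u v

lemma quotient_hom_ext {I : LieIdeal R (FreeLieAlgebra R X)}
    {f g : FreeLieAlgebra R X ⧸ I →ₗ⁅R⁆ L} (h : ∀ x, f (I.mkHom (of R x)) = g (I.mkHom (of R x))) :
    f = g := by
  have hcomp : f.comp I.mkHom = g.comp I.mkHom := hom_ext h
  ext u
  obtain ⟨u, rfl⟩ := I.mkHom_surjective u
  exact LieHom.congr_fun hcomp u

end FreeLieAlgebra

namespace ArrLie

variable {C} {𝒜 : Set (Set X)} {Rel : ∀ A : Set X, Set (FreeLieAlgebra C A)}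
  {s : ∀ A : 𝒜, LocLie C (A : Set X) Rel →ₗ⁅C⁆ ArrLie C 𝒜 Rel}
  {π : ∀ A : 𝒜, ArrLie C 𝒜 Rel →ₗ⁅C⁆ LocLie C (A : Set X) Rel}

lemma comp_eq_id
    (hs : ∀ (A : 𝒜) (a : (A : Set X)),
      s A (locMk C (A : Set X) Rel (of C a)) = arrMk C 𝒜 Rel (of C (a : X)))
    (hπ₁ : ∀ (A : 𝒜) (a : (A : Set X)),
      π A (arrMk C 𝒜 Rel (of C (a : X))) = locMk C (A : Set X) Rel (of C a)) (A : 𝒜) :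
    (π A).comp (s A) = LieHom.id :=
  quotient_hom_ext fun a => (congrArg (π A) (hs A a)).trans (hπ₁ A a)

lemma lie_comp_apply_eq_zero (hinter : ∀ A ∈ 𝒜, ∀ B ∈ 𝒜, A ≠ B → (A ∩ B).Subsingleton)
    (hs : ∀ (A : 𝒜) (a : (A : Set X)),
      s A (locMk C (A : Set X) Rel (of C a)) = arrMk C 𝒜 Rel (of C (a : X)))
    (hπ₂ : ∀ (A : 𝒜) (x : X), x ∉ (A : Set X) → π A (arrMk C 𝒜 Rel (of C x)) = 0)
    {A B : 𝒜} (hAB : A ≠ B) (u v : LocLie C (A : Set X) Rel) :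
    ⁅π B (s A u), π B (s A v)⁆ = 0 := by
  refine lie_apply_apply_eq_zero_of_quotient (g := (π B).comp (s A)) (fun a a' => ?_) u v
  change ⁅π B (s A (locMk C _ Rel (of C a))), π B (s A (locMk C _ Rel (of C a')))⁆ = 0
  rw [hs, hs]
  by_cases ha : (a : X) ∈ (B : Set X)
  · by_cases ha' : (a' : X) ∈ (B : Set X)
    · have heq : (a : X) = a' :=
        hinter A A.2 B B.2 (Subtype.coe_ne_coe.mpr hAB) ⟨a.2, ha⟩ ⟨a'.2, ha'⟩
      rw [heq, lie_self]
    · rw [hπ₂ B _ ha', lie_zero]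
  · rw [hπ₂ B _ ha, zero_lie]

lemma apply_sum_eq_of_mem_derivedSeries [Fintype 𝒜]
    (hinter : ∀ A ∈ 𝒜, ∀ B ∈ 𝒜, A ≠ B → (A ∩ B).Subsingleton)
    (hs : ∀ (A : 𝒜) (a : (A : Set X)),
      s A (locMk C (A : Set X) Rel (of C a)) = arrMk C 𝒜 Rel (of C (a : X)))
    (hπ₁ : ∀ (A : 𝒜) (a : (A : Set X)),
      π A (arrMk C 𝒜 Rel (of C (a : X))) = locMk C (A : Set X) Rel (of C a))
    (hπ₂ : ∀ (A : 𝒜) (x : X), x ∉ (A : Set X) → π A (arrMk C 𝒜 Rel (of C x)) = 0)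
    {z : ∀ A : 𝒜, LocLie C (A : Set X) Rel}
    (hz : ∀ A : 𝒜, z A ∈ LieAlgebra.derivedSeries C (LocLie C (A : Set X) Rel) 1) (B : 𝒜) :
    π B (∑ A : 𝒜, s A (z A)) = z B := by
  rw [map_sum, Finset.sum_eq_single_of_mem B (Finset.mem_univ B)]
  · exact LieHom.congr_fun (comp_eq_id hs hπ₁ B) (z B)
  · intro A _ hAB
    exact ((π B).comp (s A)).apply_eq_zero_of_mem_derivedSeries_one
      (lie_comp_apply_eq_zero hinter hs hπ₂ hAB) (hz A)

end ArrLie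

theorem statement4_general {C : Type*} [CommRing C] {X : Type*}
    (𝒜 : Set (Set X)) [Fintype ↥𝒜] (Rel : ∀ A : Set X, Set (FreeLieAlgebra C A))
    (h𝒜 : IsSetArrangement 𝒜)
    (s : ∀ A : 𝒜, LocLie C (A : Set X) Rel →ₗ⁅C⁆ ArrLie C 𝒜 Rel)
    (hs : ∀ (A : 𝒜) (a : (A : Set X)),
      s A (locMk C (A : Set X) Rel (of C a)) = arrMk C 𝒜 Rel (of C (a : X)))
    (π : ∀ A : 𝒜, ArrLie C 𝒜 Rel →ₗ⁅C⁆ LocLie C (A : Set X) Rel)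
    (hπ₁ : ∀ (A : 𝒜) (a : (A : Set X)),
      π A (arrMk C 𝒜 Rel (of C (a : X))) = locMk C (A : Set X) Rel (of C a))
    (hπ₂ : ∀ (A : 𝒜) (x : X), x ∉ (A : Set X) → π A (arrMk C 𝒜 Rel (of C x)) = 0) :
    -- `π' ∘ s' = id` on `⊕ L_A'`
    (∀ z : ∀ A : 𝒜, LocLie C (A : Set X) Rel,
      (∀ A : 𝒜, z A ∈ LieAlgebra.derivedSeries C (LocLie C (A : Set X) Rel) 1) →
      ∀ B : 𝒜, π B (∑ A : 𝒜, s A (z A)) = z B) ∧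
    -- `π'` is surjective onto `⊕ L_A'`
    (∀ w : ∀ A : 𝒜, LocLie C (A : Set X) Rel,
      (∀ A : 𝒜, w A ∈ LieAlgebra.derivedSeries C (LocLie C (A : Set X) Rel) 1) →
      ∃ u ∈ LieAlgebra.derivedSeries C (ArrLie C 𝒜 Rel) 1, ∀ A : 𝒜, π A u = w A) ∧
    -- `s'` is injective
    (∀ z w : ∀ A : 𝒜, LocLie C (A : Set X) Rel,
      (∀ A : 𝒜, z A ∈ LieAlgebra.derivedSeries C (LocLie C (A : Set X) Rel) 1) →
      (∀ A : 𝒜, w A ∈ LieAlgebra.derivedSeries C (LocLie C (A : Set X) Rel) 1) →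
      ∑ A : 𝒜, s A (z A) = ∑ A : 𝒜, s A (w A) → z = w) ∧
    -- the sum `Σ_A im(s_A')` is direct
    (∀ r : 𝒜 → ArrLie C 𝒜 Rel,
      (∀ A : 𝒜, r A ∈ s A ''
        (LieAlgebra.derivedSeries C (LocLie C (A : Set X) Rel) 1 : Set (LocLie C (A : Set X) Rel))) →
      ∑ A : 𝒜, r A = 0 → ∀ A : 𝒜, r A = 0) := by
  have hπs := fun z hz => ArrLie.apply_sum_eq_of_mem_derivedSeries h𝒜.2.1 hs hπ₁ hπ₂ (z := z) hz
  refine ⟨hπs, fun w hw => ?_, fun z w hz hw hzw => ?_, fun r hr hsum A => ?_⟩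
  · exact ⟨∑ A : 𝒜, s A (w A),
      sum_mem fun A _ => (s A).apply_mem_derivedSeries_one (hw A), hπs w hw⟩
  · funext B
    rw [← hπs z hz B, ← hπs w hw B, hzw]
  · choose z hz hzr using hr
    have hsum_z : ∑ B : 𝒜, s B (z B) = 0 := by simp only [hzr, hsum]
    rw [← hzr A, ← hπs z hz A, hsum_z, map_zero, map_zero]

/-- `π' ∘ s' = id` on `⊕_{A∈𝒜} L_A'`, `π'` is surjective, `s'` is injective, and the
submodule `im(s') = Σ_A im(s_A')` of `L'` is an internal direct sum. -/
theorem statement4 {C : Type*} [CommRing C] {X : Type*} [Fintype X]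
    (𝒜 : Set (Set X)) [Fintype ↥𝒜] (Rel : ∀ A : Set X, Set (FreeLieAlgebra C A))
    (h𝒜 : IsSetArrangement 𝒜) (hRel : AdmissibleRel C 𝒜 Rel)
    (s : ∀ A : 𝒜, LocLie C (A : Set X) Rel →ₗ⁅C⁆ ArrLie C 𝒜 Rel)
    (hs : ∀ (A : 𝒜) (a : (A : Set X)),
      s A (locMk C (A : Set X) Rel (of C a)) = arrMk C 𝒜 Rel (of C (a : X)))
    (π : ∀ A : 𝒜, ArrLie C 𝒜 Rel →ₗ⁅C⁆ LocLie C (A : Set X) Rel)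
    (hπ₁ : ∀ (A : 𝒜) (a : (A : Set X)),
      π A (arrMk C 𝒜 Rel (of C (a : X))) = locMk C (A : Set X) Rel (of C a))
    (hπ₂ : ∀ (A : 𝒜) (x : X), x ∉ (A : Set X) → π A (arrMk C 𝒜 Rel (of C x)) = 0) :
    -- `π' ∘ s' = id` on `⊕ L_A'`
    (∀ z : ∀ A : 𝒜, LocLie C (A : Set X) Rel,
      (∀ A : 𝒜, z A ∈ LieAlgebra.derivedSeries C (LocLie C (A : Set X) Rel) 1) →
      ∀ B : 𝒜, π B (∑ A : 𝒜, s A (z A)) = z B) ∧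
    -- `π'` is surjective onto `⊕ L_A'`
    (∀ w : ∀ A : 𝒜, LocLie C (A : Set X) Rel,
      (∀ A : 𝒜, w A ∈ LieAlgebra.derivedSeries C (LocLie C (A : Set X) Rel) 1) →
      ∃ u ∈ LieAlgebra.derivedSeries C (ArrLie C 𝒜 Rel) 1, ∀ A : 𝒜, π A u = w A) ∧
    -- `s'` is injective
    (∀ z w : ∀ A : 𝒜, LocLie C (A : Set X) Rel,
      (∀ A : 𝒜, z A ∈ LieAlgebra.derivedSeries C (LocLie C (A : Set X) Rel) 1) →
      (∀ A : 𝒜, w A ∈ LieAlgebra.derivedSeries C (LocLie C (A : Set X) Rel) 1) →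
      ∑ A : 𝒜, s A (z A) = ∑ A : 𝒜, s A (w A) → z = w) ∧
    -- the sum `Σ_A im(s_A')` is direct
    (∀ r : 𝒜 → ArrLie C 𝒜 Rel,
      (∀ A : 𝒜, r A ∈ s A ''
        (LieAlgebra.derivedSeries C (LocLie C (A : Set X) Rel) 1 : Set (LocLie C (A : Set X) Rel))) →
      ∑ A : 𝒜, r A = 0 → ∀ A : 𝒜, r A = 0) :=
  statement4_general 𝒜 Rel h𝒜 s hs π hπ₁ hπ₂
end

section
/- Let L be a Lie algebra of a set-arrangement 𝒜 on X and suppose [x, im(s_A')] = 0 for all A ∈ 𝒜 and all x ∈ X \ A. Then L' = ⊕_{A∈𝒜} im(s_A') (internal direct sum), [im(s_A'), im(s_B')] = 0 for A ≠ B, and L' is isomorphic as a Lie algebra to the direct product ⊕_{A∈𝒜} L_A'. -/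
open FreeLieAlgebra

variable (C : Type*) [CommRing C] {X : Type*}

open scoped DirectSum

/-!
For `A ∈ 𝒜`, the map `F(X) → L_A` killing the generators outside `A` factors through `L`,
giving a retraction `π_A` of `s_A`. Indeed, for `B ≠ A` the generators of `F(B)` are sent to
pairwise commuting elements, as `A ∩ B` has at most one point, so `[F(B), F(B)] ⊇ R_B` is
killed; by the same token `π_A` kills `im(s_B')`. This makes the sum of the `im(s_A')` direct.
The hypothesis makes each `im(s_A')` an ideal of `L`, so `[im(s_A'), im(s_B')]` lies in
`im(s_A') ∩ im(s_B') = 0`, and `Σ_A im(s_A')` is an ideal containing the brackets of any two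
generators, hence all of `L'`.
-/

namespace LieIdeal

variable {R L L' : Type*} [CommRing R] [LieRing L] [LieAlgebra R L] [LieRing L'] [LieAlgebra R L']

noncomputable def mkQ (I : LieIdeal R L) : L →ₗ⁅R⁆ L ⧸ I :=
  { I.toSubmodule.mkQ with map_lie' := rfl }

theorem mkQ_apply (I : LieIdeal R L) (x : L) : I.mkQ x = LieSubmodule.Quotient.mk x := rfl

theorem mkQ_surjective (I : LieIdeal R L) : Function.Surjective I.mkQ :=
  LieSubmodule.Quotient.surjective_mk' I

noncomputable def liftQ (I : LieIdeal R L) (f : L →ₗ⁅R⁆ L') (h : I ≤ f.ker) : L ⧸ I →ₗ⁅R⁆ L' :=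
  { I.toSubmodule.liftQ f.toLinearMap fun x hx => f.mem_ker.1 (h hx) with
    map_lie' := fun {x y} => by
      obtain ⟨a, rfl⟩ := I.mkQ_surjective x
      obtain ⟨b, rfl⟩ := I.mkQ_surjective y
      exact f.map_lie a b }

end LieIdeal

def LieSubalgebra.centralizer {R L : Type*} [CommRing R] [LieRing L] [LieAlgebra R L]
    (S : Set L) : LieSubalgebra R L where
  carrier := {v | ∀ s ∈ S, ⁅s, v⁆ = 0}
  add_mem' ha hb s hs := by rw [lie_add, ha s hs, hb s hs, add_zero]
  zero_mem' s _ := lie_zero s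
  smul_mem' c v hv s hs := by rw [lie_smul, hv s hs, smul_zero]
  lie_mem' ha hb s hs := by rw [leibniz_lie, ha s hs, hb s hs, zero_lie, lie_zero, add_zero]

namespace LieAlgebra

variable {R L : Type*} [CommRing R] [LieRing L] [LieAlgebra R L]

theorem derivedSeries_one_le_iff (I : LieIdeal R L) :
    derivedSeries R L 1 ≤ I ↔ ∀ x y : L, ⁅x, y⁆ ∈ I := by
  rw [derivedSeries_def, derivedSeriesOfIdeal_succ, derivedSeriesOfIdeal_zero,
    LieSubmodule.lie_le_iff]
  simp only [LieSubmodule.mem_top, forall_const]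

theorem lie_mem_derivedSeries_one (x y : L) : ⁅x, y⁆ ∈ derivedSeries R L 1 := by
  rw [derivedSeries_def, derivedSeriesOfIdeal_succ, derivedSeriesOfIdeal_zero]
  exact LieSubmodule.lie_mem_lie (LieSubmodule.mem_top x) (LieSubmodule.mem_top y)

end LieAlgebra

namespace FreeLieAlgebra

variable {R Y L : Type*} [CommRing R] [LieRing L] [LieAlgebra R L]

theorem mem_of_forall_of_mem {K : LieSubalgebra R (FreeLieAlgebra R Y)} (h : ∀ y, of R y ∈ K)
    (w : FreeLieAlgebra R Y) : w ∈ K := by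
  have hid : K.incl.comp (lift R fun y => (⟨of R y, h y⟩ : K)) = LieHom.id :=
    hom_ext fun y => by simp [lift_of_apply]
  rw [← LieHom.id_apply (R := R) w, ← hid]
  exact ((lift R fun y => (⟨of R y, h y⟩ : K)) w).2

theorem mem_of_surjective (f : FreeLieAlgebra R Y →ₗ⁅R⁆ L) (hf : Function.Surjective f)
    {K : LieSubalgebra R L} (h : ∀ y, f (of R y) ∈ K) (u : L) : u ∈ K := by
  obtain ⟨w, rfl⟩ := hf u
  exact mem_of_forall_of_mem (K := K.comap f) h w

theorem lie_map_eq_zero (f : FreeLieAlgebra R Y →ₗ⁅R⁆ L)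
    (h : ∀ y y', ⁅f (of R y), f (of R y')⁆ = 0) (u v : FreeLieAlgebra R Y) : ⁅f u, f v⁆ = 0 := by
  have hgen : ∀ w, f w ∈ LieSubalgebra.centralizer (R := R) (Set.range fun y => f (of R y)) :=
    mem_of_forall_of_mem (K := (LieSubalgebra.centralizer _).comap f) fun y' => by
      rintro _ ⟨y, rfl⟩
      exact h y y'
  have hall : ∀ w, f w ∈ LieSubalgebra.centralizer (R := R) (Set.range f) :=
    mem_of_forall_of_mem (K := (LieSubalgebra.centralizer _).comap f) fun y => by
      rintro _ ⟨w, rfl⟩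
      rw [← lie_skew, neg_eq_zero]
      exact hgen w _ ⟨y, rfl⟩
  exact hall v _ ⟨u, rfl⟩

theorem lie_map_mem (f : FreeLieAlgebra R Y →ₗ⁅R⁆ L) (I : LieIdeal R L)
    (h : ∀ y y', ⁅f (of R y), f (of R y')⁆ ∈ I) (u v : FreeLieAlgebra R Y) : ⁅f u, f v⁆ ∈ I := by
  have := lie_map_eq_zero (I.mkQ.comp f) (fun y y' => by
    rw [LieHom.comp_apply, LieHom.comp_apply, ← LieHom.map_lie, LieIdeal.mkQ_apply,
      LieSubmodule.Quotient.mk_eq_zero']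
    exact h y y') u v
  rwa [LieHom.comp_apply, LieHom.comp_apply, ← LieHom.map_lie, LieIdeal.mkQ_apply,
    LieSubmodule.Quotient.mk_eq_zero'] at this

theorem derivedSeries_one_le_ker (f : FreeLieAlgebra R Y →ₗ⁅R⁆ L)
    (h : ∀ y y', ⁅f (of R y), f (of R y')⁆ = 0) :
    LieAlgebra.derivedSeries R (FreeLieAlgebra R Y) 1 ≤ f.ker :=
  (LieAlgebra.derivedSeries_one_le_iff _).2 fun u v => by
    rw [LieHom.mem_ker, LieHom.map_lie]
    exact lie_map_eq_zero f h u v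

theorem derivedSeries_one_le_of_surjective (f : FreeLieAlgebra R Y →ₗ⁅R⁆ L)
    (hf : Function.Surjective f) (I : LieIdeal R L)
    (h : ∀ y y', ⁅f (of R y), f (of R y')⁆ ∈ I) : LieAlgebra.derivedSeries R L 1 ≤ I :=
  (LieAlgebra.derivedSeries_one_le_iff I).2 fun x y => by
    obtain ⟨u, rfl⟩ := hf x
    obtain ⟨v, rfl⟩ := hf y
    exact lie_map_mem f I h u v

end FreeLieAlgebra

section Arrangement

variable {C} {𝒜 : Set (Set X)} {Rel : ∀ A : Set X, Set (FreeLieAlgebra C A)}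

theorem inclX_of (A : Set X) (a : A) : inclX C A (of C a) = of C (a : X) :=
  lift_of_apply _ _

theorem locProj_of_mem {A : Set X} {x : X} (h : x ∈ A) :
    locProj C A Rel (of C x) = locMk C A Rel (of C ⟨x, h⟩) := by
  rw [locProj, lift_of_apply, dif_pos h]

theorem locProj_of_notMem {A : Set X} {x : X} (h : x ∉ A) : locProj C A Rel (of C x) = 0 := by
  rw [locProj, lift_of_apply, dif_neg h]

theorem locProj_inclX (A : Set X) (w : FreeLieAlgebra C A) :
    locProj C A Rel (inclX C A w) = locMk C A Rel w := by
  have h : (locProj C A Rel).comp (inclX C A) = (locIdeal C A Rel).mkQ :=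
    hom_ext fun a => by rw [LieHom.comp_apply, inclX_of, locProj_of_mem a.2]; rfl
  exact LieHom.congr_fun h w

theorem lie_locProj_of_of_eq_zero {A B : Set X} (hAB : (A ∩ B).Subsingleton) (b b' : B) :
    ⁅locProj C A Rel (of C (b : X)), locProj C A Rel (of C (b' : X))⁆ = 0 := by
  by_cases hb : (b : X) ∈ A
  · by_cases hb' : (b' : X) ∈ A
    · obtain rfl : b = b' := Subtype.ext (hAB ⟨hb, b.2⟩ ⟨hb', b'.2⟩)
      exact lie_self _
    · rw [locProj_of_notMem hb', lie_zero]
  · rw [locProj_of_notMem hb, zero_lie]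

theorem locProj_inclX_eq_zero {A B : Set X} (hAB : (A ∩ B).Subsingleton)
    {w : FreeLieAlgebra C B} (hw : w ∈ LieAlgebra.derivedSeries C (FreeLieAlgebra C B) 1) :
    locProj C A Rel (inclX C B w) = 0 :=
  derivedSeries_one_le_ker ((locProj C A Rel).comp (inclX C B))
    (fun b b' => by
      simpa only [LieHom.comp_apply, inclX_of] using lie_locProj_of_of_eq_zero hAB b b')
    hw

theorem definingIdeal_le_ker_locProj (h𝒜 : IsSetArrangement 𝒜) (hRel : AdmissibleRel C 𝒜 Rel)
    {A : Set X} (hA : A ∈ 𝒜) : definingIdeal C 𝒜 Rel ≤ (locProj C A Rel).ker := by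
  rw [definingIdeal, LieSubmodule.lieSpan_le]
  rintro _ (⟨x, y, hxy, rfl⟩ | hz)
  · rw [SetLike.mem_coe, LieHom.mem_ker, LieHom.map_lie]
    by_cases hx : x ∈ A
    · have hy : y ∉ A := fun hy => hxy A hA (Set.insert_subset hx (Set.singleton_subset_iff.2 hy))
      rw [locProj_of_notMem hy, lie_zero]
    · rw [locProj_of_notMem hx, zero_lie]
  · simp only [Set.mem_iUnion, Set.mem_image] at hz
    obtain ⟨B, hB, r, hr, rfl⟩ := hz
    rw [SetLike.mem_coe, LieHom.mem_ker]
    by_cases hBA : B = A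
    · subst hBA
      rw [locProj_inclX, locMk, LieSubmodule.Quotient.mk_eq_zero']
      exact LieSubmodule.subset_lieSpan hr
    · exact locProj_inclX_eq_zero (h𝒜.2.1 A hA B hB (Ne.symm hBA)) (hRel B hB hr)

/-- `π_A`, a retraction of `s_A`. -/
noncomputable def arrProj (h𝒜 : IsSetArrangement 𝒜) (hRel : AdmissibleRel C 𝒜 Rel) {A : Set X}
    (hA : A ∈ 𝒜) : ArrLie C 𝒜 Rel →ₗ⁅C⁆ LocLie C A Rel :=
  (definingIdeal C 𝒜 Rel).liftQ (locProj C A Rel) (definingIdeal_le_ker_locProj h𝒜 hRel hA)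

def IsInducedByInclusion (s : ∀ A : 𝒜, LocLie C (A : Set X) Rel →ₗ⁅C⁆ ArrLie C 𝒜 Rel) : Prop :=
  ∀ (A : 𝒜) (a : (A : Set X)), s A (locMk C A Rel (of C a)) = arrMk C 𝒜 Rel (of C (a : X))

noncomputable def imDer (s : ∀ A : 𝒜, LocLie C (A : Set X) Rel →ₗ⁅C⁆ ArrLie C 𝒜 Rel) (A : 𝒜) :
    LieSubalgebra C (ArrLie C 𝒜 Rel) :=
  (LieAlgebra.derivedSeries C (LocLie C (A : Set X) Rel) 1).toLieSubalgebra.map (s A)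

def CommutesOutside (s : ∀ A : 𝒜, LocLie C (A : Set X) Rel →ₗ⁅C⁆ ArrLie C 𝒜 Rel) : Prop :=
  ∀ (A : 𝒜) (x : X), x ∉ (A : Set X) → ∀ r ∈ imDer s A, ⁅arrMk C 𝒜 Rel (of C x), r⁆ = 0

variable {s : ∀ A : 𝒜, LocLie C (A : Set X) Rel →ₗ⁅C⁆ ArrLie C 𝒜 Rel}

theorem IsInducedByInclusion.apply_locMk (hs : IsInducedByInclusion s) (A : 𝒜)
    (w : FreeLieAlgebra C A) : s A (locMk C A Rel w) = arrMk C 𝒜 Rel (inclX C A w) := by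
  have h : (s A).comp (locIdeal C A Rel).mkQ = (definingIdeal C 𝒜 Rel).mkQ.comp (inclX C A) :=
    hom_ext fun a => by rw [LieHom.comp_apply, LieHom.comp_apply, inclX_of]; exact hs A a
  exact LieHom.congr_fun h w

theorem arrProj_apply_self (h𝒜 : IsSetArrangement 𝒜) (hRel : AdmissibleRel C 𝒜 Rel)
    (hs : IsInducedByInclusion s) (A : 𝒜) (z : LocLie C A Rel) :
    arrProj h𝒜 hRel A.2 (s A z) = z := by
  obtain ⟨w, rfl⟩ := (locIdeal C A Rel).mkQ_surjective z
  exact (congrArg _ (hs.apply_locMk A w)).trans (locProj_inclX _ w)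

theorem arrProj_eq_zero_of_mem_imDer (h𝒜 : IsSetArrangement 𝒜) (hRel : AdmissibleRel C 𝒜 Rel)
    (hs : IsInducedByInclusion s) {A B : 𝒜} (hAB : A ≠ B) {r : ArrLie C 𝒜 Rel}
    (hr : r ∈ imDer s B) : arrProj h𝒜 hRel A.2 r = 0 := by
  obtain ⟨z, hz, rfl⟩ := hr
  rw [← LieIdeal.derivedSeries_map_eq 1 (locIdeal C B Rel).mkQ_surjective] at hz
  obtain ⟨⟨w, hw⟩, rfl⟩ := LieIdeal.mem_map_of_surjective (locIdeal C B Rel).mkQ_surjective hz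
  exact (congrArg _ (hs.apply_locMk B w)).trans
    (locProj_inclX_eq_zero (h𝒜.2.1 A A.2 B B.2 (Subtype.coe_ne_coe.2 hAB)) hw)

theorem eq_zero_of_arrProj_eq_zero (h𝒜 : IsSetArrangement 𝒜) (hRel : AdmissibleRel C 𝒜 Rel)
    (hs : IsInducedByInclusion s) {A : 𝒜} {r : ArrLie C 𝒜 Rel} (hr : r ∈ imDer s A)
    (h : arrProj h𝒜 hRel A.2 r = 0) : r = 0 := by
  obtain ⟨z, -, rfl⟩ := hr
  rw [LieHom.coe_toLinearMap, arrProj_apply_self h𝒜 hRel hs A z] at h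
  rw [LieHom.coe_toLinearMap, h, map_zero]

theorem lie_mem_imDer (hs : IsInducedByInclusion s) (hcomm : CommutesOutside s) (A : 𝒜)
    (u : ArrLie C 𝒜 Rel) {r : ArrLie C 𝒜 Rel} (hr : r ∈ imDer s A) : ⁅u, r⁆ ∈ imDer s A := by
  suffices u ∈ (imDer s A).normalizer from (LieSubalgebra.mem_normalizer_iff _ u).1 this r hr
  refine mem_of_surjective _ (LieIdeal.mkQ_surjective _) (fun x => ?_) u
  rw [LieSubalgebra.mem_normalizer_iff]
  rintro _ ⟨z, hz, rfl⟩
  by_cases hx : x ∈ (A : Set X)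
  · rw [LieIdeal.mkQ_apply, ← arrMk, ← hs A ⟨x, hx⟩, LieHom.coe_toLinearMap, ← LieHom.map_lie]
    exact ⟨_, LieSubmodule.lie_mem _ hz, rfl⟩
  · rw [LieIdeal.mkQ_apply, ← arrMk, hcomm A x hx _ ⟨z, hz, rfl⟩]
    exact zero_mem _

noncomputable def imDerIdeal (hs : IsInducedByInclusion s) (hcomm : CommutesOutside s) (A : 𝒜) :
    LieIdeal C (ArrLie C 𝒜 Rel) :=
  { (imDer s A).toSubmodule with lie_mem := lie_mem_imDer hs hcomm A _ }

theorem derivedSeries_one_le_iSup_imDerIdeal (hs : IsInducedByInclusion s)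
    (hcomm : CommutesOutside s) :
    LieAlgebra.derivedSeries C (ArrLie C 𝒜 Rel) 1 ≤ ⨆ A, imDerIdeal hs hcomm A := by
  refine derivedSeries_one_le_of_surjective _ (LieIdeal.mkQ_surjective _) _ fun x y => ?_
  rw [← LieHom.map_lie, LieIdeal.mkQ_apply, ← arrMk]
  by_cases hxy : ∃ A ∈ 𝒜, ({x, y} : Set X) ⊆ A
  · obtain ⟨A, hA, hxy⟩ := hxy
    have hx : x ∈ A := hxy (Set.mem_insert _ _)
    have hy : y ∈ A := hxy (Set.mem_insert_of_mem _ rfl)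
    have : arrMk C 𝒜 Rel ⁅of C x, of C y⁆ =
        s ⟨A, hA⟩ ⁅locMk C A Rel (of C ⟨x, hx⟩), locMk C A Rel (of C ⟨y, hy⟩)⁆ := by
      rw [LieHom.map_lie, hs, hs]; rfl
    rw [this]
    exact LieSubmodule.mem_iSup_of_mem ⟨A, hA⟩ ⟨_, LieAlgebra.lie_mem_derivedSeries_one _ _, rfl⟩
  · push Not at hxy
    have : arrMk C 𝒜 Rel ⁅of C x, of C y⁆ = 0 :=
      LieSubmodule.Quotient.mk_eq_zero'.2 (LieSubmodule.subset_lieSpan (Or.inl ⟨x, y, hxy, rfl⟩))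
    rw [this]
    exact zero_mem _

theorem derivedSeries_one_eq_iSup_imDer (hs : IsInducedByInclusion s) (hcomm : CommutesOutside s) :
    (LieAlgebra.derivedSeries C (ArrLie C 𝒜 Rel) 1).toSubmodule =
      ⨆ A, (imDer s A).toSubmodule := by
  refine le_antisymm ?_ (iSup_le fun A => ?_)
  · have h := derivedSeries_one_le_iSup_imDerIdeal hs hcomm
    rwa [← LieSubmodule.toSubmodule_le_toSubmodule, LieSubmodule.iSup_toSubmodule] at h
  · rintro _ ⟨z, hz, rfl⟩
    exact LieIdeal.derivedSeries_map_le (f := s A) 1 (LieIdeal.mem_map hz)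

theorem eq_zero_of_sum_eq_zero_of_mem_imDer [Fintype 𝒜] (h𝒜 : IsSetArrangement 𝒜)
    (hRel : AdmissibleRel C 𝒜 Rel) (hs : IsInducedByInclusion s) {r : 𝒜 → ArrLie C 𝒜 Rel}
    (hr : ∀ A, r A ∈ imDer s A) (hsum : ∑ A, r A = 0) (A : 𝒜) : r A = 0 := by
  refine eq_zero_of_arrProj_eq_zero h𝒜 hRel hs (hr A) ?_
  have := congrArg (arrProj h𝒜 hRel A.2) hsum
  rwa [map_zero, map_sum, Finset.sum_eq_single_of_mem A (Finset.mem_univ A)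
    fun B _ hBA => arrProj_eq_zero_of_mem_imDer h𝒜 hRel hs (Ne.symm hBA) (hr B)] at this

theorem lie_eq_zero_of_mem_imDer_of_ne (h𝒜 : IsSetArrangement 𝒜) (hRel : AdmissibleRel C 𝒜 Rel)
    (hs : IsInducedByInclusion s) (hcomm : CommutesOutside s) {A B : 𝒜} (hAB : A ≠ B)
    {r t : ArrLie C 𝒜 Rel} (hr : r ∈ imDer s A) (ht : t ∈ imDer s B) : ⁅r, t⁆ = 0 := by
  have hrA : ⁅r, t⁆ ∈ imDer s A := by
    rw [← lie_skew]
    exact neg_mem (lie_mem_imDer hs hcomm A t hr)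
  exact eq_zero_of_arrProj_eq_zero h𝒜 hRel hs (lie_mem_imDer hs hcomm B r ht)
    (arrProj_eq_zero_of_mem_imDer h𝒜 hRel hs hAB.symm hrA)

noncomputable def imDerSum [DecidableEq 𝒜] (h𝒜 : IsSetArrangement 𝒜)
    (hRel : AdmissibleRel C 𝒜 Rel) (hs : IsInducedByInclusion s) (hcomm : CommutesOutside s) :
    (⨁ A : 𝒜, LieAlgebra.derivedSeries C (LocLie C (A : Set X) Rel) 1) →ₗ⁅C⁆ ArrLie C 𝒜 Rel :=
  DirectSum.toLieAlgebra (ArrLie C 𝒜 Rel) (fun A => (s A).comp (LieIdeal.incl _))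
    fun _ _ hAB z w =>
      lie_eq_zero_of_mem_imDer_of_ne h𝒜 hRel hs hcomm hAB ⟨z, z.2, rfl⟩ ⟨w, w.2, rfl⟩

section imDerSum

variable [DecidableEq 𝒜] (h𝒜 : IsSetArrangement 𝒜) (hRel : AdmissibleRel C 𝒜 Rel)
  (hs : IsInducedByInclusion s) (hcomm : CommutesOutside s)

theorem imDerSum_of (A : 𝒜) (z : LieAlgebra.derivedSeries C (LocLie C (A : Set X) Rel) 1) :
    imDerSum h𝒜 hRel hs hcomm (DirectSum.of _ A z) = s A z := by
  rw [← DirectSum.lof_eq_of C]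
  exact DirectSum.toModule_lof (R := C) (N := ArrLie C 𝒜 Rel)
    (M := fun A : 𝒜 => LieAlgebra.derivedSeries C (LocLie C (A : Set X) Rel) 1) A z

theorem arrProj_imDerSum (A : 𝒜)
    (f : ⨁ A : 𝒜, LieAlgebra.derivedSeries C (LocLie C (A : Set X) Rel) 1) :
    arrProj h𝒜 hRel A.2 (imDerSum h𝒜 hRel hs hcomm f) = f A := by
  induction f using DirectSum.induction_on with
  | zero => simp
  | of B z =>
    rw [imDerSum_of]
    obtain rfl | hBA := eq_or_ne B A
    · rw [DirectSum.of_eq_same, arrProj_apply_self h𝒜 hRel hs]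
    · rw [DirectSum.of_eq_of_ne _ _ _ hBA.symm, ZeroMemClass.coe_zero]
      exact arrProj_eq_zero_of_mem_imDer h𝒜 hRel hs hBA.symm ⟨z, z.2, rfl⟩
  | add f g hf hg => rw [map_add, map_add, hf, hg, DirectSum.add_apply, LieSubmodule.coe_add]

theorem imDerSum_injective : Function.Injective (imDerSum h𝒜 hRel hs hcomm) := fun f g h =>
  DFinsupp.ext fun A => Subtype.ext <| by
    rw [← arrProj_imDerSum h𝒜 hRel hs hcomm, ← arrProj_imDerSum h𝒜 hRel hs hcomm, h]

theorem range_imDerSum :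
    LinearMap.range (imDerSum h𝒜 hRel hs hcomm).toLinearMap = ⨆ A, (imDer s A).toSubmodule := by
  refine le_antisymm ?_ (iSup_le fun A => ?_)
  · rintro _ ⟨f, rfl⟩
    induction f using DirectSum.induction_on with
    | zero => exact zero_mem _
    | of A z =>
      rw [LieHom.coe_toLinearMap, imDerSum_of]
      exact Submodule.mem_iSup_of_mem A ⟨z, z.2, rfl⟩
    | add f g hf hg => rw [map_add]; exact add_mem hf hg
  · rintro _ ⟨z, hz, rfl⟩
    exact ⟨DirectSum.of _ A ⟨z, hz⟩, imDerSum_of h𝒜 hRel hs hcomm A ⟨z, hz⟩⟩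

end imDerSum

theorem nonempty_derivedSeries_lieEquiv_directSum (h𝒜 : IsSetArrangement 𝒜)
    (hRel : AdmissibleRel C 𝒜 Rel) (hs : IsInducedByInclusion s) (hcomm : CommutesOutside s) :
    Nonempty (LieAlgebra.derivedSeries C (ArrLie C 𝒜 Rel) 1 ≃ₗ⁅C⁆
      ⨁ A : 𝒜, LieAlgebra.derivedSeries C (LocLie C (A : Set X) Rel) 1) := by
  classical
  have hrange : ((imDerSum h𝒜 hRel hs hcomm).range : Set (ArrLie C 𝒜 Rel)) =
      (LieAlgebra.derivedSeries C (ArrLie C 𝒜 Rel) 1).toLieSubalgebra := by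
    have h := range_imDerSum h𝒜 hRel hs hcomm
    rw [← derivedSeries_one_eq_iSup_imDer hs hcomm] at h
    exact congrArg (fun p : Submodule C (ArrLie C 𝒜 Rel) => (p : Set (ArrLie C 𝒜 Rel))) h
  exact ⟨((LieEquiv.ofInjective _ (imDerSum_injective h𝒜 hRel hs hcomm)).trans
    (LieEquiv.ofEq _ _ hrange)).symm⟩

end Arrangement

theorem statement6_general {C : Type*} [CommRing C] {X : Type*}
    (𝒜 : Set (Set X)) [Fintype ↥𝒜] (Rel : ∀ A : Set X, Set (FreeLieAlgebra C A))
    (h𝒜 : IsSetArrangement 𝒜) (hRel : AdmissibleRel C 𝒜 Rel)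
    (s : ∀ A : 𝒜, LocLie C (A : Set X) Rel →ₗ⁅C⁆ ArrLie C 𝒜 Rel)
    (hs : ∀ (A : 𝒜) (a : (A : Set X)),
      s A (locMk C (A : Set X) Rel (of C a)) = arrMk C 𝒜 Rel (of C (a : X)))
    (hcomm : ∀ (A : 𝒜) (x : X), x ∉ (A : Set X) →
      ∀ r ∈ s A ''
        (LieAlgebra.derivedSeries C (LocLie C (A : Set X) Rel) 1 : Set (LocLie C (A : Set X) Rel)),
        ⁅arrMk C 𝒜 Rel (of C x), r⁆ = 0) :
    -- `L' = Σ_A im(s_A')` …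
    (LieSubmodule.toSubmodule (LieAlgebra.derivedSeries C (ArrLie C 𝒜 Rel) 1) =
      ⨆ A : 𝒜, Submodule.map (s A).toLinearMap
        (LieSubmodule.toSubmodule (LieAlgebra.derivedSeries C (LocLie C (A : Set X) Rel) 1))) ∧
    -- … and the sum is direct
    (∀ r : 𝒜 → ArrLie C 𝒜 Rel,
      (∀ A : 𝒜, r A ∈ s A ''
        (LieAlgebra.derivedSeries C (LocLie C (A : Set X) Rel) 1 : Set (LocLie C (A : Set X) Rel))) →
      ∑ A : 𝒜, r A = 0 → ∀ A : 𝒜, r A = 0) ∧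
    -- `[im(s_A'), im(s_B')] = 0` for `A ≠ B`
    (∀ A B : 𝒜, A ≠ B →
      ∀ r ∈ s A ''
        (LieAlgebra.derivedSeries C (LocLie C (A : Set X) Rel) 1 : Set (LocLie C (A : Set X) Rel)),
      ∀ t ∈ s B ''
        (LieAlgebra.derivedSeries C (LocLie C (B : Set X) Rel) 1 : Set (LocLie C (B : Set X) Rel)),
        ⁅r, t⁆ = 0) ∧
    -- `L' ≅ ⊕_A L_A'` as Lie algebras
    Nonempty (↥(LieAlgebra.derivedSeries C (ArrLie C 𝒜 Rel) 1) ≃ₗ⁅C⁆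
      (⨁ A : 𝒜, ↥(LieAlgebra.derivedSeries C (LocLie C (A : Set X) Rel) 1))) := by
  refine ⟨derivedSeries_one_eq_iSup_imDer hs hcomm,
    fun r hr hsum => eq_zero_of_sum_eq_zero_of_mem_imDer h𝒜 hRel hs hr hsum,
    fun A B hAB r hr t ht => lie_eq_zero_of_mem_imDer_of_ne h𝒜 hRel hs hcomm hAB hr ht,
    nonempty_derivedSeries_lieEquiv_directSum h𝒜 hRel hs hcomm⟩

/-- If `[x, im(s_A')] = 0` for all `A ∈ 𝒜` and `x ∈ X \ A`, then
`L' = ⊕_{A∈𝒜} im(s_A')` (internal direct sum), `[im(s_A'), im(s_B')] = 0` for `A ≠ B`,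
and `L'` is isomorphic as a Lie algebra to the direct product `⊕_{A∈𝒜} L_A'`. -/
theorem statement6 {C : Type*} [CommRing C] {X : Type*} [Fintype X]
    (𝒜 : Set (Set X)) [Fintype ↥𝒜] (Rel : ∀ A : Set X, Set (FreeLieAlgebra C A))
    (h𝒜 : IsSetArrangement 𝒜) (hRel : AdmissibleRel C 𝒜 Rel)
    (s : ∀ A : 𝒜, LocLie C (A : Set X) Rel →ₗ⁅C⁆ ArrLie C 𝒜 Rel)
    (hs : ∀ (A : 𝒜) (a : (A : Set X)),
      s A (locMk C (A : Set X) Rel (of C a)) = arrMk C 𝒜 Rel (of C (a : X)))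
    (hcomm : ∀ (A : 𝒜) (x : X), x ∉ (A : Set X) →
      ∀ r ∈ s A ''
        (LieAlgebra.derivedSeries C (LocLie C (A : Set X) Rel) 1 : Set (LocLie C (A : Set X) Rel)),
        ⁅arrMk C 𝒜 Rel (of C x), r⁆ = 0) :
    -- `L' = Σ_A im(s_A')` …
    (LieSubmodule.toSubmodule (LieAlgebra.derivedSeries C (ArrLie C 𝒜 Rel) 1) =
      ⨆ A : 𝒜, Submodule.map (s A).toLinearMap
        (LieSubmodule.toSubmodule (LieAlgebra.derivedSeries C (LocLie C (A : Set X) Rel) 1))) ∧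
    -- … and the sum is direct
    (∀ r : 𝒜 → ArrLie C 𝒜 Rel,
      (∀ A : 𝒜, r A ∈ s A ''
        (LieAlgebra.derivedSeries C (LocLie C (A : Set X) Rel) 1 : Set (LocLie C (A : Set X) Rel))) →
      ∑ A : 𝒜, r A = 0 → ∀ A : 𝒜, r A = 0) ∧
    -- `[im(s_A'), im(s_B')] = 0` for `A ≠ B`
    (∀ A B : 𝒜, A ≠ B →
      ∀ r ∈ s A ''
        (LieAlgebra.derivedSeries C (LocLie C (A : Set X) Rel) 1 : Set (LocLie C (A : Set X) Rel)),
      ∀ t ∈ s B ''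
        (LieAlgebra.derivedSeries C (LocLie C (B : Set X) Rel) 1 : Set (LocLie C (B : Set X) Rel)),
        ⁅r, t⁆ = 0) ∧
    -- `L' ≅ ⊕_A L_A'` as Lie algebras
    Nonempty (↥(LieAlgebra.derivedSeries C (ArrLie C 𝒜 Rel) 1) ≃ₗ⁅C⁆
      (⨁ A : 𝒜, ↥(LieAlgebra.derivedSeries C (LocLie C (A : Set X) Rel) 1))) :=
  statement6_general 𝒜 Rel h𝒜 hRel s hs hcomm
end

section
/- The holonomy Lie algebra of a set-arrangement 𝒜 satisfies the replacement condition: for every A = {y_1,…,y_k} ∈ 𝒜 and every x = y_j ∈ A, the derived subalgebra L_A' of the localized Lie algebra L_A is contained in the Lie subalgebra of L_A generated by A \ {x}. (Indeed, for all i ≠ j the relation [y_j, y_i] = Σ_{r≠j} [y_i, y_r] holds in L_A.) -/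
/-!
Summing the defining relations `⁅y_i, y_1 + ⋯ + y_k⁆ = 0` of `L_A` gives
`⁅y_j, y_i⁆ = Σ_{r ≠ j} ⁅y_i, y_r⁆`, so the derivation `ad y_j` maps the generators of the
subalgebra `S` generated by `A \ {y_j}` into `S`, hence preserves `S`. Then `C y_j + S` is
closed under brackets and contains all generators, so it is all of `L_A`, and the bracket of
two elements `c y_j + s`, `d y_j + t` lies in `S`.
-/

open FreeLieAlgebra

variable (C : Type*) [CommRing C] {X : Type*}

open Classical in
/-- The holonomy relations of a set `A`: `⁅y_i, y_1 + ⋯ + y_k⁆` for each `y_i ∈ A`. -/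
noncomputable def holRel (C : Type*) [CommRing C] {X : Type*} [Fintype X] (A : Set X) :
    Set (FreeLieAlgebra C A) :=
  {z | ∃ a : A, z = ⁅of C a, ∑ b : A, of C b⁆}


section DerivedSubalgebra

variable {R L : Type*} [CommRing R] [LieRing L] [LieAlgebra R L] {e : L} {T : Set L}

open LieSubalgebra

theorem lie_mem_lieSpan_of_lie_mem (he : ∀ t ∈ T, ⁅e, t⁆ ∈ lieSpan R L T) {s : L}
    (hs : s ∈ lieSpan R L T) : ⁅e, s⁆ ∈ lieSpan R L T := by
  induction hs using lieSpan_induction with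
  | mem t ht => exact he t ht
  | zero => simp
  | add x y _ _ hx hy => simpa [lie_add] using add_mem hx hy
  | smul c x _ hx => simpa [lie_smul] using (lieSpan R L T).smul_mem c hx
  | lie x y hx' hy' hx hy =>
    rw [leibniz_lie]
    exact add_mem (lie_mem _ hx hy') (lie_mem _ hx' hy)

theorem lie_smul_add_mem_lieSpan (he : ∀ t ∈ T, ⁅e, t⁆ ∈ lieSpan R L T) (c d : R) {s t : L}
    (hs : s ∈ lieSpan R L T) (ht : t ∈ lieSpan R L T) :
    ⁅c • e + s, d • e + t⁆ ∈ lieSpan R L T := by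
  have hes := lie_mem_lieSpan_of_lie_mem he hs
  have het := lie_mem_lieSpan_of_lie_mem he ht
  rw [add_lie, lie_add, lie_add, smul_lie, smul_lie, lie_smul, lie_smul, lie_self, smul_zero,
    smul_zero, zero_add, ← lie_skew s e]
  exact add_mem ((lieSpan R L T).smul_mem c het)
    (add_mem ((lieSpan R L T).smul_mem d (neg_mem hes)) (lie_mem _ hs ht))

theorem exists_smul_add_of_mem_lieSpan_insert (he : ∀ t ∈ T, ⁅e, t⁆ ∈ lieSpan R L T) {u : L}
    (hu : u ∈ lieSpan R L (insert e T)) : ∃ c : R, ∃ s ∈ lieSpan R L T, u = c • e + s := by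
  induction hu using lieSpan_induction with
  | mem u hu =>
    rcases hu with rfl | hu
    · exact ⟨1, 0, zero_mem _, by simp⟩
    · exact ⟨0, u, subset_lieSpan hu, by simp⟩
  | zero => exact ⟨0, 0, zero_mem _, by simp⟩
  | add u v _ _ hu hv =>
    obtain ⟨c, s, hs, rfl⟩ := hu
    obtain ⟨d, t, ht, rfl⟩ := hv
    exact ⟨c + d, s + t, add_mem hs ht, by rw [add_smul]; abel⟩
  | smul a u _ hu =>
    obtain ⟨c, s, hs, rfl⟩ := hu
    exact ⟨a * c, a • s, (lieSpan R L T).smul_mem a hs, by rw [smul_add, smul_smul]⟩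
  | lie u v _ _ hu hv =>
    obtain ⟨c, s, hs, rfl⟩ := hu
    obtain ⟨d, t, ht, rfl⟩ := hv
    exact ⟨0, _, lie_smul_add_mem_lieSpan he c d hs ht, by simp⟩

theorem LieAlgebra.derivedSeries_one_subset_lieSpan (hgen : lieSpan R L (insert e T) = ⊤)
    (he : ∀ t ∈ T, ⁅e, t⁆ ∈ lieSpan R L T) :
    (LieAlgebra.derivedSeries R L 1 : Set L) ⊆ lieSpan R L T := by
  have hdecomp (u : L) : ∃ c : R, ∃ s ∈ lieSpan R L T, u = c • e + s :=
    exists_smul_add_of_mem_lieSpan_insert he (hgen ▸ mem_top u)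
  intro u hu
  change u ∈ (LieIdeal.toLieSubalgebra R L (LieAlgebra.derivedSeries R L 1)).toSubmodule at hu
  rw [LieAlgebra.coe_derivedSeries_one_eq] at hu
  refine (Submodule.span_le (p := (lieSpan R L T).toSubmodule)).mpr ?_ hu
  rintro _ ⟨x, y, rfl⟩
  obtain ⟨c, s, hs, rfl⟩ := hdecomp x
  obtain ⟨d, t, ht, rfl⟩ := hdecomp y
  exact lie_smul_add_mem_lieSpan he c d hs ht

end DerivedSubalgebra

theorem FreeLieAlgebra.lieSpan_range_of (R Y : Type*) [CommRing R] :
    LieSubalgebra.lieSpan R (FreeLieAlgebra R Y) (Set.range (of R)) = ⊤ := by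
  set S := LieSubalgebra.lieSpan R (FreeLieAlgebra R Y) (Set.range (of R))
  let f : FreeLieAlgebra R Y →ₗ⁅R⁆ S :=
    lift R fun y => ⟨of R y, LieSubalgebra.subset_lieSpan ⟨y, rfl⟩⟩
  have hf : S.incl.comp f = LieHom.id := hom_ext fun y => by simp [f]
  refine eq_top_iff.mpr fun u _ => ?_
  have hu : S.incl (f u) = u := by rw [← LieHom.comp_apply, hf, LieHom.id_apply]
  exact hu ▸ (f u).2

theorem locMk_lie (A : Set X) (Rel : ∀ A : Set X, Set (FreeLieAlgebra C A))
    (u v : FreeLieAlgebra C A) :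
    locMk C A Rel ⁅u, v⁆ = ⁅locMk C A Rel u, locMk C A Rel v⁆ :=
  LieSubmodule.Quotient.mk_bracket _ u v

theorem lieSpan_range_locMk_of (A : Set X) (Rel : ∀ A : Set X, Set (FreeLieAlgebra C A)) :
    LieSubalgebra.lieSpan C (LocLie C A Rel) (Set.range fun a => locMk C A Rel (of C a)) = ⊤ := by
  rw [eq_top_iff]
  rintro u -
  obtain ⟨w, rfl⟩ := LieSubmodule.Quotient.surjective_mk' (locIdeal C A Rel) u
  rw [LieSubmodule.Quotient.mk'_apply]
  have hw : w ∈ LieSubalgebra.lieSpan C (FreeLieAlgebra C A) (Set.range (of C)) := by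
    rw [FreeLieAlgebra.lieSpan_range_of]
    trivial
  induction hw using LieSubalgebra.lieSpan_induction with
  | mem w hw =>
    obtain ⟨a, rfl⟩ := hw
    exact LieSubalgebra.subset_lieSpan ⟨a, rfl⟩
  | zero => simp
  | add v w _ _ hv hw => simpa using add_mem hv hw
  | smul c w _ hw => simpa using LieSubalgebra.smul_mem _ c hw
  | lie v w _ _ hv hw =>
    rw [LieSubmodule.Quotient.mk_bracket]
    exact LieSubalgebra.lie_mem _ hv hw

theorem lieSpan_insert_locMk_of_eq_top (A : Set X) (Rel : ∀ A : Set X, Set (FreeLieAlgebra C A))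
    (x : A) :
    LieSubalgebra.lieSpan C (LocLie C A Rel)
      (insert (locMk C A Rel (of C x)) {z | ∃ a : A, a ≠ x ∧ z = locMk C A Rel (of C a)}) = ⊤ := by
  refine eq_top_iff.mpr ((lieSpan_range_locMk_of C A Rel).ge.trans (LieSubalgebra.lieSpan_mono ?_))
  rintro _ ⟨a, rfl⟩
  by_cases hax : a = x
  · exact Or.inl (hax ▸ rfl)
  · exact Or.inr ⟨a, hax, rfl⟩

section Holonomy

variable {C} [Fintype X] {A : Set X}

open Classical in
theorem sum_locMk_holRel_lie_eq_zero (i : A) :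
    ∑ r : A, locMk C A (holRel C) ⁅of C i, of C r⁆ = 0 := by
  have h : locMk C A (holRel C) ⁅of C i, ∑ b : A, of C b⁆ = 0 :=
    (LieSubmodule.Quotient.mk_eq_zero' (N := locIdeal C A (holRel C))).mpr
      (LieSubmodule.subset_lieSpan ⟨i, rfl⟩)
  rwa [lie_sum, locMk, ← LieSubmodule.Quotient.mk'_apply, map_sum] at h

open Classical in
theorem locMk_holRel_lie_eq_sum (x i : A) :
    locMk C A (holRel C) ⁅of C x, of C i⁆ =
      ∑ r : A, if r ≠ x then locMk C A (holRel C) ⁅of C i, of C r⁆ else 0 := by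
  have h := sum_locMk_holRel_lie_eq_zero (C := C) i
  rw [← Finset.add_sum_erase _ _ (Finset.mem_univ x)] at h
  rw [← Finset.sum_filter, Finset.filter_ne', ← lie_skew, locMk,
    ← LieSubmodule.Quotient.mk'_apply, map_neg]
  exact neg_eq_of_add_eq_zero_right h

open Classical in
theorem lie_locMk_of_mem_lieSpan_of_ne {x i : A} (hi : i ≠ x) :
    ⁅locMk C A (holRel C) (of C x), locMk C A (holRel C) (of C i)⁆ ∈
      LieSubalgebra.lieSpan C (LocLie C A (holRel C))
        {z | ∃ a : A, a ≠ x ∧ z = locMk C A (holRel C) (of C a)} := by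
  rw [← locMk_lie, locMk_holRel_lie_eq_sum x i]
  refine sum_mem fun r _ => ?_
  split_ifs with hr
  · rw [locMk_lie]
    exact LieSubalgebra.lie_mem _ (LieSubalgebra.subset_lieSpan ⟨i, hi, rfl⟩)
      (LieSubalgebra.subset_lieSpan ⟨r, hr, rfl⟩)
  · exact zero_mem _

end Holonomy

open Classical in
theorem statement7_general {C : Type*} [CommRing C] {X : Type*} [Fintype X]
    (A : Set X) :
    (∀ x i : A, x ≠ i →
      locMk C A (holRel C) ⁅of C x, of C i⁆ =
        ∑ r : A, if r ≠ x then locMk C A (holRel C) ⁅of C i, of C r⁆ else 0) ∧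
    ∀ x : A,
      (LieAlgebra.derivedSeries C (LocLie C A (holRel C)) 1 : Set (LocLie C A (holRel C))) ⊆
        (LieSubalgebra.lieSpan C (LocLie C A (holRel C))
          {z | ∃ a : A, a ≠ x ∧ z = locMk C A (holRel C) (of C a)} :
            Set (LocLie C A (holRel C))) := by
  refine ⟨fun x i _ => locMk_holRel_lie_eq_sum x i, fun x => ?_⟩
  refine LieAlgebra.derivedSeries_one_subset_lieSpan (lieSpan_insert_locMk_of_eq_top C A _ x) ?_
  rintro _ ⟨i, hi, rfl⟩
  exact lie_locMk_of_mem_lieSpan_of_ne hi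

open Classical in
/-- The holonomy Lie algebra satisfies the replacement condition: for every `A ∈ 𝒜` and every
`x ∈ A`, the derived subalgebra `L_A'` is contained in the Lie subalgebra of `L_A` generated by
`A \ {x}`; indeed, for all `i ≠ j` the relation `⁅y_j, y_i⁆ = Σ_{r ≠ j} ⁅y_i, y_r⁆` holds
in `L_A`. -/
theorem statement7 {C : Type*} [CommRing C] {X : Type*} [Fintype X]
    (𝒜 : Set (Set X)) (h𝒜 : IsSetArrangement 𝒜)
    (A : Set X) (hA : A ∈ 𝒜) :
    (∀ x i : A, x ≠ i →
      locMk C A (holRel C) ⁅of C x, of C i⁆ =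
        ∑ r : A, if r ≠ x then locMk C A (holRel C) ⁅of C i, of C r⁆ else 0) ∧
    ∀ x : A,
      (LieAlgebra.derivedSeries C (LocLie C A (holRel C)) 1 : Set (LocLie C A (holRel C))) ⊆
        (LieSubalgebra.lieSpan C (LocLie C A (holRel C))
          {z | ∃ a : A, a ≠ x ∧ z = locMk C A (holRel C) (of C a)} :
            Set (LocLie C A (holRel C))) :=
  statement7_general A
end
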